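/- Extraction recovers the channel from a quantum pair: Let σ be a quantum state on ℂ^n that is positive definite (hence invertible), and let c : Fin m → Fin m → Matrix (Fin n) (Fin n) ℂ be a unital channel representation (∑_k c k k = 1). Define pair(σ,c) (i,k) (j,ℓ) := conj((√σ * c k ℓ * √σ) i j). Then for all k, ℓ ∈ Fin m: ∑_{i,j} conj(pair(σ,c) (i,k) (j,ℓ)) • ((√σ)⁻¹ * E i j * (√σ)⁻¹) = c k ℓ, where E i j denotes the single-entry matrix |i⟩⟨j| (Matrix.stdBasisMatrix i j 1). -/

import Mathlib

open Matrix
open scoped ComplexOrder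

noncomputable def Matrix.PosSemidef.sqrt {n : Type*} [Fintype n] [DecidableEq n] {𝕜 : Type*}
    [RCLike 𝕜] {A : Matrix n n 𝕜} (hA : A.PosSemidef) : Matrix n n 𝕜 :=
  (hA.1.eigenvectorUnitary : Matrix n n 𝕜) * diagonal (fun i => ((√(hA.1.eigenvalues i) : ℝ) : 𝕜)) *
    (star hA.1.eigenvectorUnitary : Matrix n n 𝕜)

/-! The two conjugations cancel, the sum over matrix units rebuilds `√σ * c k ℓ * √σ`, and
conjugating by `(√σ)⁻¹` undoes it: `√σ` is invertible since `(det √σ) ^ 2 = det σ ≠ 0`. -/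

section

variable {n : Type*} [Fintype n] [DecidableEq n]

theorem Matrix.PosSemidef.sqrt_mul_self {𝕜 : Type*} [RCLike 𝕜] {A : Matrix n n 𝕜}
    (hA : A.PosSemidef) : hA.sqrt * hA.sqrt = A := by
  conv_rhs => rw [hA.1.spectral_theorem, Unitary.conjStarAlgAut_apply]
  set U : Matrix n n 𝕜 := (hA.1.eigenvectorUnitary : Matrix n n 𝕜)
  set D : Matrix n n 𝕜 := diagonal fun i => ((√(hA.1.eigenvalues i) : ℝ) : 𝕜)
  have hU : star U * U = 1 := by simp [U]
  have hD : D * D = diagonal (RCLike.ofReal ∘ hA.1.eigenvalues) := by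
    simp only [D, diagonal_mul_diagonal, ← RCLike.ofReal_mul,
      Real.mul_self_sqrt (hA.eigenvalues_nonneg _)]
    rfl
  calc hA.sqrt * hA.sqrt = U * (D * (star U * U) * D) * star U := by
        simp only [Matrix.PosSemidef.sqrt, U, D, Matrix.mul_assoc]
    _ = _ := by rw [hU, Matrix.mul_one, hD]

theorem Matrix.PosDef.isUnit_det_sqrt {𝕜 : Type*} [RCLike 𝕜] {A : Matrix n n 𝕜}
    (hA : A.PosDef) : IsUnit hA.posSemidef.sqrt.det := by
  have hsq : hA.posSemidef.sqrt.det * hA.posSemidef.sqrt.det = A.det := by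
    rw [← det_mul, hA.posSemidef.sqrt_mul_self]
  exact isUnit_of_mul_isUnit_left (hsq ▸ (isUnit_iff_isUnit_det A).mp hA.isUnit)

theorem Matrix.sum_smul_mul_single_mul {R : Type*} [CommSemiring R] (A M B : Matrix n n R) :
    ∑ i, ∑ j, M i j • (A * single i j 1 * B) = A * M * B := by
  conv_rhs => rw [matrix_eq_sum_single M]
  simp only [Finset.mul_sum, Finset.sum_mul]
  refine Finset.sum_congr rfl fun i _ => Finset.sum_congr rfl fun j _ => ?_
  rw [← Matrix.smul_mul, ← Matrix.mul_smul, smul_single, smul_eq_mul, mul_one]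

end

theorem extr_pair_general {n m : ℕ}
    (σ : Matrix (Fin n) (Fin n) ℂ)
    (hσ : σ.PosDef)
    (c : Fin m → Fin m → Matrix (Fin n) (Fin n) ℂ) :
    ∀ k ℓ, (∑ i, ∑ j,
        (starRingEnd ℂ) ((starRingEnd ℂ) ((hσ.posSemidef.sqrt * c k ℓ * hσ.posSemidef.sqrt) i j))
          • ((hσ.posSemidef.sqrt)⁻¹ * Matrix.single i j 1 * (hσ.posSemidef.sqrt)⁻¹))
      = c k ℓ := by
  intro k ℓ
  have hS := hσ.isUnit_det_sqrt
  simp only [Complex.conj_conj]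
  rw [sum_smul_mul_single_mul, ← Matrix.mul_assoc, ← Matrix.mul_assoc, nonsing_inv_mul _ hS,
    Matrix.one_mul, Matrix.mul_assoc, mul_nonsing_inv _ hS, Matrix.mul_one]

/-- Extraction recovers the channel from a quantum pair: for a positive definite
state `σ` and a unital channel representation `c`, extracting from
`pair(σ,c) (i,k) (j,ℓ) = conj((√σ * c k ℓ * √σ) i j)` gives back `c`. -/
theorem extr_pair {n m : ℕ}
    (σ : Matrix (Fin n) (Fin n) ℂ)
    (hσ : σ.PosDef) (hσtr : σ.trace = 1)
    (c : Fin m → Fin m → Matrix (Fin n) (Fin n) ℂ)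
    (hc : (∑ k, c k k) = 1) :
    ∀ k ℓ, (∑ i, ∑ j,
        (starRingEnd ℂ) ((starRingEnd ℂ) ((hσ.posSemidef.sqrt * c k ℓ * hσ.posSemidef.sqrt) i j))
          • ((hσ.posSemidef.sqrt)⁻¹ * Matrix.single i j 1 * (hσ.posSemidef.sqrt)⁻¹))
      = c k ℓ :=
  extr_pair_general σ hσ c
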